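/- Let y : [0,T] → ℝ be nonnegative and differentiable with y(0) ≤ c₀ ε⁴, and suppose y'(t) + (2λ₀/ε) y(t) ≤ C₅ (y(t) + ε⁴ + M² e^{2C₄ t}) on [0,T], where M ≤ K ε², all constants positive, and ε < λ₀/C₅. Then there exists a constant C (depending on c₀, C₅, C₄, K, λ₀, T but not on ε) such that y(t) ≤ C ε⁴ for all t ∈ [0,T]. -/
import Mathlib


/-- Final Grönwall closure of the remainder estimate: the dissipation `2λ₀/ε` absorbs
the `C₅ y` term when `ε < λ₀/C₅`, yielding a uniform `y(t) ≤ C ε⁴` bound with `C`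
independent of `ε`. -/
theorem remainder_gronwall_closure
    (c₀ C₅ C₄ K lam0 T : ℝ)
    (hc₀ : 0 < c₀) (hC₅ : 0 < C₅) (hC₄ : 0 < C₄) (hK : 0 < K)
    (hlam0 : 0 < lam0) (hT : 0 < T) :
    ∃ C : ℝ, 0 < C ∧ ∀ (ε M : ℝ) (y y' : ℝ → ℝ),
      0 < ε → ε < lam0 / C₅ → 0 ≤ M → M ≤ K * ε ^ 2 →
      (∀ t ∈ Set.Icc (0 : ℝ) T, HasDerivAt y (y' t) t) →
      (∀ t ∈ Set.Icc (0 : ℝ) T, 0 ≤ y t) →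
      y 0 ≤ c₀ * ε ^ 4 →
      (∀ t ∈ Set.Icc (0 : ℝ) T,
        y' t + (2 * lam0 / ε) * y t ≤
          C₅ * (y t + ε ^ 4 + M ^ 2 * Real.exp (2 * C₄ * t))) →
      ∀ t ∈ Set.Icc (0 : ℝ) T, y t ≤ C * ε ^ 4 := by
  refine ⟨c₀ + C₅ * (1 + K ^ 2 * Real.exp (2 * C₄ * T)) * T, by positivity, ?_⟩
  intro ε M y y' hε hεlt hM0 hMK hderiv hy0 hinit hineq t ht
  set B : ℝ := C₅ * (1 + K ^ 2 * Real.exp (2 * C₄ * T)) * ε ^ 4 with hB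
  have hBpos : 0 < B := by positivity
  -- Key: C₅ ≤ 2 * lam0 / ε
  have habs : C₅ ≤ 2 * lam0 / ε := by
    rw [le_div_iff₀ hε]
    nlinarith [(lt_div_iff₀ hC₅).mp hεlt]
  -- derivative bound: y' t ≤ B on Icc
  have hderivB : ∀ s ∈ Set.Icc (0 : ℝ) T, y' s ≤ B := by
    intro s hs
    have h1 := hineq s hs
    have h2 : C₅ * y s ≤ (2 * lam0 / ε) * y s :=
      mul_le_mul_of_nonneg_right habs (hy0 s hs)
    have h3 : Real.exp (2 * C₄ * s) ≤ Real.exp (2 * C₄ * T) :=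
      Real.exp_le_exp.mpr (by nlinarith [hs.2])
    have hM2 : M ^ 2 ≤ K ^ 2 * ε ^ 4 := by nlinarith
    have hexp : (0:ℝ) < Real.exp (2 * C₄ * s) := Real.exp_pos _
    have hexpT : (0:ℝ) < Real.exp (2 * C₄ * T) := Real.exp_pos _
    have : M ^ 2 * Real.exp (2 * C₄ * s) ≤ K ^ 2 * ε ^ 4 * Real.exp (2 * C₄ * T) := by
      have := mul_le_mul hM2 h3 hexp.le (by positivity)
      linarith
    nlinarith
  -- g := y - B * t is antitone on [0, T]
  set g : ℝ → ℝ := fun s => y s - B * s with hg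
  have hgderiv : ∀ s ∈ Set.Icc (0 : ℝ) T, HasDerivAt g (y' s - B) s := by
    intro s hs
    exact (hderiv s hs).sub (by simpa using (hasDerivAt_id s).const_mul B)
  have hgant : AntitoneOn g (Set.Icc 0 T) := by
    apply antitoneOn_of_deriv_nonpos (convex_Icc 0 T)
    · intro s hs
      exact (hgderiv s hs).continuousAt.continuousWithinAt
    · intro s hs
      exact ((hgderiv s (interior_subset hs)).differentiableAt).differentiableWithinAt
    · intro s hs
      have hs' : s ∈ Set.Icc (0 : ℝ) T := interior_subset hs
      rw [(hgderiv s hs').deriv]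
      linarith [hderivB s hs']
  have h0 : (0:ℝ) ∈ Set.Icc (0:ℝ) T := ⟨le_refl 0, hT.le⟩
  have := hgant h0 ht ht.1
  simp only [hg, mul_zero, sub_zero] at this
  have hBt : B * t ≤ B * T := mul_le_mul_of_nonneg_left ht.2 hBpos.le
  have : y t ≤ y 0 + B * T := by linarith
  have hfin : y t ≤ c₀ * ε ^ 4 + B * T := by linarith
  calc y t ≤ c₀ * ε ^ 4 + B * T := hfin
    _ = (c₀ + C₅ * (1 + K ^ 2 * Real.exp (2 * C₄ * T)) * T) * ε ^ 4 := by ring
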